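/- arXiv:0803.4227 — 6 statements merged into one kernel-verified Lean document; each statement's English description precedes it below -/
import Mathlib

section
/- If T is an element of a unital C*-algebra K with Im T ≥ ε·1 for some ε > 0, then Im(T⁻¹) ≤ -(ε + ε⁻¹‖T‖²)⁻¹·1; in particular T⁻¹ lies in the lower half-plane H₋(K). -/
/-!
With `B = Im T`, positivity of `(T - it)^* (T - it) = T^* T - 2t B + t²` at `t = ε`, and of the
same expression for `T^*` (whose imaginary part is `-B`) at `t = -ε`, gives `T^* T ≥ ε²` and
`T T^* ≥ ε²`; hence `T` is invertible. For `V = T⁻¹` one has `Im V = -V B V^* ≤ -ε V V^*`, and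
`V V^* = (T^* T)⁻¹ ≥ (ε² + ‖T‖²)⁻¹` because inversion is operator antitone and `T^* T ≤ ‖T‖²`.

The compatibility `star (c • x) = conj c • star x` is automatic: `star` is continuous, hence
`ℝ`-linear, and `u = I • 1` is normal with `u² = -1`, which in an ordered C⋆-ring forces `u^* = -u`.
-/

/-- The imaginary part `(T - T*)/(2i)` of an element of a `ℂ`-algebra with star. -/
noncomputable def imPart {K : Type*} [Ring K] [Algebra ℂ K] [StarRing K] (T : K) : K :=
  (2 * Complex.I)⁻¹ • (T - star T)

/-- The lower half-plane of a C*-algebra: elements `S` with `Im S ≤ -δ·1` for some `δ > 0`. -/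
def lowerHalfPlane {K : Type*} [Ring K] [Algebra ℂ K] [StarRing K] [PartialOrder K] :
    Set K :=
  {S | ∃ δ : ℝ, 0 < δ ∧ imPart S ≤ (-δ : ℂ) • (1 : K)}

section Ring
variable {K : Type*} [Ring K] [StarRing K] [Algebra ℂ K]

lemma imPart_star (T : K) : imPart (star T) = -imPart T := by
  rw [imPart, imPart, star_star, ← smul_neg, neg_sub]

lemma imPart_units_inv (u : Kˣ) :
    imPart (↑u⁻¹ : K) = -(↑u⁻¹ * imPart (u : K) * star (↑u⁻¹ : K)) := by
  have : (↑u⁻¹ : K) - star ↑u⁻¹ = ↑u⁻¹ * (star ↑u - ↑u) * star (↑u⁻¹ : K) := by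
    simp only [mul_sub, sub_mul, Units.inv_mul, one_mul, mul_assoc, ← star_mul, star_one, mul_one]
  rw [imPart, imPart, this, ← neg_sub (u : K), mul_neg, neg_mul, smul_neg, mul_smul_comm,
    smul_mul_assoc]

lemma star_mul_self_sub_ofReal_mul_I_smul_one [StarModule ℂ K] (T : K) (t : ℝ) :
    star (T - (t * Complex.I) • 1) * (T - (t * Complex.I) • 1) =
      star T * T - (2 * t) • imPart T + algebraMap ℝ K (t ^ 2) := by
  simp only [imPart, star_sub, star_smul, star_one, mul_sub, sub_mul, smul_mul_assoc,
    mul_smul_comm, one_mul, mul_one, smul_smul, smul_sub, Algebra.algebraMap_eq_smul_one]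
  match_scalars <;> simp [Complex.ext_iff, ← Complex.ofReal_pow] <;> ring_nf

end Ring

section StarModule
variable {K : Type*} [NormedRing K] [StarRing K]

lemma star_ofReal_smul [NormedAlgebra ℂ K] [ContinuousStar K] (r : ℝ) (x : K) :
    star ((r : ℂ) • x) = (r : ℂ) • star x := by
  simpa only [Complex.coe_smul, starAddEquiv_apply] using
    map_real_smul (starAddEquiv : K ≃+ K) continuous_star r x

variable [CStarRing K] [PartialOrder K] [StarOrderedRing K]

lemma star_eq_neg_of_mul_self_eq_neg_one {u : K} (hu : u * u = -1) (hcomm : Commute (star u) u) :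
    star u = -u := by
  set p := star u * u
  have hp : p * p = 1 := by
    calc p * p = star (u * u) * (u * u) := by
          simp only [p, star_mul, mul_assoc, hcomm.left_comm u]
      _ = 1 := by simp [hu]
  set r := 1 - p
  have hr : IsSelfAdjoint r := (IsSelfAdjoint.one K).sub (IsSelfAdjoint.star_mul_self u)
  have hconj : star r * p * r = -(star r * r) := by
    have : p * r = -r := by simp only [r, mul_sub, hp, mul_one, neg_sub]
    rw [hr.star_eq, mul_assoc, this, mul_neg]
  have hrr : star r * r = 0 := le_antisymm
    (neg_nonneg.mp (hconj ▸ star_left_conjugate_nonneg (star_mul_self_nonneg u) r))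
    (star_mul_self_nonneg r)
  have hp1 : p = 1 := (sub_eq_zero.mp (CStarRing.star_mul_self_eq_zero_iff r |>.mp hrr)).symm
  calc star u = p * -u := by simp only [p, mul_neg, mul_assoc, hu, mul_one, neg_neg]
    _ = -u := by rw [hp1, one_mul]

variable [NormedAlgebra ℂ K]

lemma star_algebraMap_complex (c : ℂ) : star (algebraMap ℂ K c) = algebraMap ℂ K (star c) := by
  have hI : star (algebraMap ℂ K Complex.I) = -algebraMap ℂ K Complex.I :=
    star_eq_neg_of_mul_self_eq_neg_one (by simp [← map_mul])
      (Algebra.commute_algebraMap_right _ _)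
  have hc : algebraMap ℂ K c = (c.re : ℂ) • 1 + (c.im : ℂ) • algebraMap ℂ K Complex.I := by
    rw [Algebra.algebraMap_eq_smul_one, Algebra.algebraMap_eq_smul_one, smul_smul, ← add_smul,
      Complex.re_add_im]
  rw [hc, star_add, star_ofReal_smul, star_ofReal_smul, star_one, hI, smul_neg,
    Algebra.algebraMap_eq_smul_one, Algebra.algebraMap_eq_smul_one, smul_smul, ← sub_eq_add_neg,
    ← sub_smul]
  congr 1
  apply Complex.ext <;> simp

lemma starModule_complex_of_starOrderedRing : StarModule ℂ K where
  star_smul c x := by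
    rw [Algebra.smul_def, star_mul, star_algebraMap_complex, ← Algebra.commutes, ← Algebra.smul_def]

end StarModule

section CStarAlgebra
variable {A : Type*} [CStarAlgebra A] [PartialOrder A] [StarOrderedRing A]

lemma smul_imPart_sub_le_star_mul_self (T : A) (t : ℝ) :
    (2 * t) • imPart T - algebraMap ℝ A (t ^ 2) ≤ star T * T := by
  have := star_mul_self_nonneg (T - (t * Complex.I) • 1)
  rw [star_mul_self_sub_ofReal_mul_I_smul_one] at this
  rw [← sub_nonneg]
  convert this using 1
  abel

variable {T : A} {ε : ℝ}

lemma algebraMap_sq_le_smul_imPart_sub (hε : 0 ≤ ε) (h : algebraMap ℝ A ε ≤ imPart T) :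
    algebraMap ℝ A (ε ^ 2) ≤ (2 * ε) • imPart T - algebraMap ℝ A (ε ^ 2) :=
  calc algebraMap ℝ A (ε ^ 2) = (2 * ε) • algebraMap ℝ A ε - algebraMap ℝ A (ε ^ 2) := by
        rw [Algebra.smul_def, ← map_mul, ← map_sub]; ring_nf
    _ ≤ (2 * ε) • imPart T - algebraMap ℝ A (ε ^ 2) := by gcongr

lemma algebraMap_sq_le_star_mul_self_of_le_imPart (hε : 0 ≤ ε)
    (h : algebraMap ℝ A ε ≤ imPart T) : algebraMap ℝ A (ε ^ 2) ≤ star T * T :=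
  (algebraMap_sq_le_smul_imPart_sub hε h).trans (smul_imPart_sub_le_star_mul_self T ε)

lemma algebraMap_sq_le_mul_star_self_of_le_imPart (hε : 0 ≤ ε)
    (h : algebraMap ℝ A ε ≤ imPart T) : algebraMap ℝ A (ε ^ 2) ≤ T * star T := by
  have := smul_imPart_sub_le_star_mul_self (star T) (-ε)
  rw [imPart_star, star_star, neg_sq, smul_neg, ← neg_smul, ← mul_neg, neg_neg] at this
  exact (algebraMap_sq_le_smul_imPart_sub hε h).trans this

lemma isUnit_of_algebraMap_le_imPart (hε : 0 < ε) (h : algebraMap ℝ A ε ≤ imPart T) :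
    IsUnit T := by
  have : IsStrictlyPositive (algebraMap ℝ A (ε ^ 2)) :=
    isStrictlyPositive_algebraMap (by positivity)
  obtain ⟨l, hl⟩ := (CStarAlgebra.isUnit_of_le _
    (algebraMap_sq_le_star_mul_self_of_le_imPart hε.le h)).exists_left_inv
  obtain ⟨r, hr⟩ := (CStarAlgebra.isUnit_of_le _
    (algebraMap_sq_le_mul_star_self_of_le_imPart hε.le h)).exists_right_inv
  exact isUnit_iff_exists_and_exists.mpr
    ⟨⟨star T * r, by rw [← mul_assoc, hr]⟩, ⟨l * star T, by rw [mul_assoc, hl]⟩⟩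

lemma algebraMap_inv_le_inv_mul_star_inv (u : Aˣ) {c : ℝ} (hc : ‖(u : A)‖ ^ 2 ≤ c)
    (hc0 : 0 < c) : algebraMap ℝ A c⁻¹ ≤ ↑u⁻¹ * star (↑u⁻¹ : A) := by
  let cu : Aˣ := Units.map (algebraMap ℝ A : ℝ →* A) (Units.mk0 c hc0.ne')
  have hle : ((star u * u : Aˣ) : A) ≤ cu := by
    simpa [cu] using CStarAlgebra.star_mul_le_algebraMap_norm_sq.trans (algebraMap_mono A hc)
  have := CStarAlgebra.inv_le_inv (by simp [star_mul_self_nonneg]) hle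
  simpa [cu, mul_inv_rev, Units.coe_star_inv] using this

lemma imPart_inv_le_of_algebraMap_le_imPart (u : Aˣ) (hε : 0 < ε)
    (h : algebraMap ℝ A ε ≤ imPart (u : A)) :
    imPart (↑u⁻¹ : A) ≤ algebraMap ℝ A (-(ε + ε⁻¹ * ‖(u : A)‖ ^ 2)⁻¹) := by
  set v : A := ↑u⁻¹
  set c := ε ^ 2 + ‖(u : A)‖ ^ 2
  have hc : (ε + ε⁻¹ * ‖(u : A)‖ ^ 2)⁻¹ = ε * c⁻¹ := by
    simp only [c]
    field_simp
  have hlow : algebraMap ℝ A c⁻¹ ≤ v * star v :=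
    algebraMap_inv_le_inv_mul_star_inv u (le_add_of_nonneg_left (by positivity)) (by positivity)
  rw [imPart_units_inv, hc, map_neg, neg_le_neg_iff]
  calc algebraMap ℝ A (ε * c⁻¹) = ε • algebraMap ℝ A c⁻¹ := by rw [Algebra.smul_def, map_mul]
    _ ≤ ε • (v * star v) := by gcongr
    _ = v * algebraMap ℝ A ε * star v := by rw [Algebra.smul_def, ← mul_assoc, Algebra.commutes]
    _ ≤ v * imPart (u : A) * star v := by
        simpa only [star_star] using star_left_conjugate_le_conjugate h (star v)

end CStarAlgebra

/-- If `T` is an element of a unital C*-algebra `K` with `Im T ≥ ε·1` for some `ε > 0`, then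
`Im (T⁻¹) ≤ -(ε + ε⁻¹‖T‖²)⁻¹·1`; in particular `T⁻¹` lies in the lower half-plane. -/
theorem imPart_inv_le_of_imPart_pos {K : Type*} [NormedRing K] [StarRing K] [CStarRing K]
    [NormedAlgebra ℂ K] [CompleteSpace K] [PartialOrder K] [StarOrderedRing K]
    (T : K) (ε : ℝ) (hε : 0 < ε) (h : (ε : ℂ) • (1 : K) ≤ imPart T) :
    imPart (Ring.inverse T) ≤ (-(ε + ε⁻¹ * ‖T‖ ^ 2)⁻¹ : ℂ) • (1 : K) ∧
      Ring.inverse T ∈ lowerHalfPlane := by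
  have : StarModule ℂ K := starModule_complex_of_starOrderedRing
  let : CStarAlgebra K := {}
  have hsmul (r : ℝ) : (r : ℂ) • (1 : K) = algebraMap ℝ K r := by
    rw [Algebra.algebraMap_eq_smul_one, Complex.coe_smul]
  rw [hsmul] at h
  obtain ⟨u, rfl⟩ := isUnit_of_algebraMap_le_imPart hε h
  have hbound := imPart_inv_le_of_algebraMap_le_imPart u hε h
  rw [Ring.inverse_unit]
  refine ⟨?_, (ε + ε⁻¹ * ‖(u : K)‖ ^ 2)⁻¹, by positivity, ?_⟩ <;>
    exact_mod_cast hsmul _ ▸ hbound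
end

section
/- Let A be a unital algebra over ℂ and ∂ : A → A ⊗ A a derivation (for the natural A-bimodule structure on A ⊗ A) which is a coassociative comultiplication. Suppose X ∈ A with ∂X = 1 ⊗ 1. If α = (a_{ij}) ∈ Mₙ(A) is an invertible corepresentation of (A, ∂) (i.e. ∂a_{ij} = Σₖ a_{ik} ⊗ a_{kj}), then α⁻¹ = (n_{ij} - Xδ_{ij}) for some elements n_{ij} in ker ∂. -/
open TensorProduct

variable {A : Type*} [Ring A] [Algebra ℂ A]

/-- `d : A → A ⊗ A` is a derivation for the natural `A`-bimodule structure on `A ⊗ A`,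
i.e. `d(ab) = a·d(b) + d(a)·b` where `a·(x⊗y) = ax⊗y` and `(x⊗y)·b = x⊗yb`. -/
def IsTensorDerivation (d : A →ₗ[ℂ] A ⊗[ℂ] A) : Prop :=
  ∀ a b : A, d (a * b) =
    LinearMap.rTensor A (LinearMap.mulLeft ℂ a) (d b) +
    LinearMap.lTensor A (LinearMap.mulRight ℂ b) (d a)

/-- `∂` is a coassociative comultiplication: `(d ⊗ id) ∘ d = (id ⊗ d) ∘ d`
(up to the associator). -/
def IsCoassociative (d : A →ₗ[ℂ] A ⊗[ℂ] A) : Prop :=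
  ∀ a : A, TensorProduct.assoc ℂ A A A (LinearMap.rTensor A d (d a)) =
    LinearMap.lTensor A d (d a)

/-- `α` is a corepresentation of `(A, d)`: `d a_{ij} = Σₖ a_{ik} ⊗ a_{kj}`. -/
def IsCorepresentation {n : ℕ} (d : A →ₗ[ℂ] A ⊗[ℂ] A)
    (α : Matrix (Fin n) (Fin n) A) : Prop :=
  ∀ i j : Fin n, d (α i j) = ∑ k : Fin n, α i k ⊗ₜ[ℂ] α k j

/-!
Applying `d` to `α * α⁻¹ = 1` and expanding with the derivation rule and the corepresentation
property gives `∑ₖ α_ik • d(α⁻¹)_kj = -(α_ij ⊗ 1)`. Multiplying on the left by `α⁻¹` yields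
`d(α⁻¹)_ij = -δ_ij (1 ⊗ 1) = d(-δ_ij X)`, so `α⁻¹ + diag(X, …, X)` has entries in `ker d`.
-/

lemma rTensor_mulLeft_eq_smul (a : A) (t : A ⊗[ℂ] A) :
    LinearMap.rTensor A (LinearMap.mulLeft ℂ a) t = a • t := by
  induction t using TensorProduct.induction_on with
  | zero => simp
  | tmul x y => simp [smul_tmul']
  | add x y hx hy => simp [hx, hy]

lemma Matrix.eq_sum_smul_of_mul_eq_one {R M ι : Type*} [Ring R] [AddCommGroup M] [Module R M]
    [Fintype ι] [DecidableEq ι] {α β : Matrix ι ι R} (hβα : β * α = 1) {D E : ι → M}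
    (h : ∀ i, ∑ k, α i k • D k = E i) (m : ι) :
    D m = ∑ i, β m i • E i := calc
  D m = ∑ k, (β * α) m k • D k := by simp [hβα, Matrix.one_apply, ite_smul]
  _ = ∑ i, β m i • ∑ k, α i k • D k := by
    simp only [Matrix.mul_apply, Finset.sum_smul, Finset.smul_sum, mul_smul]
    exact Finset.sum_comm
  _ = ∑ i, β m i • E i := by simp only [h]

namespace IsTensorDerivation

variable {d : A →ₗ[ℂ] A ⊗[ℂ] A}

lemma map_one (hder : IsTensorDerivation d) : d 1 = 0 := by
  simpa [rTensor_mulLeft_eq_smul] using hder 1 1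

lemma map_mul (hder : IsTensorDerivation d) (a b : A) :
    d (a * b) = a • d b + LinearMap.lTensor A (LinearMap.mulRight ℂ b) (d a) := by
  rw [hder, rTensor_mulLeft_eq_smul]

end IsTensorDerivation

namespace IsCorepresentation

variable {n : ℕ} {d : A →ₗ[ℂ] A ⊗[ℂ] A} {α : Matrix (Fin n) (Fin n) A}

lemma map_mul_left (hder : IsTensorDerivation d) (hα : IsCorepresentation d α) (i k : Fin n)
    (b : A) : d (α i k * b) = α i k • d b + ∑ l, α i l ⊗ₜ[ℂ] (α l k * b) := by
  simp [hder.map_mul, hα i k]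

lemma sum_smul_map_of_mul_eq_one (hder : IsTensorDerivation d) (hα : IsCorepresentation d α)
    {β : Matrix (Fin n) (Fin n) A} (hαβ : α * β = 1) (i j : Fin n) :
    ∑ k, α i k • d (β k j) = -(α i j ⊗ₜ[ℂ] (1 : A)) := by
  have hsum : ∑ k, ∑ l, α i l ⊗ₜ[ℂ] (α l k * β k j) = α i j ⊗ₜ[ℂ] (1 : A) := by
    simp only [Finset.sum_comm (γ := Fin n), ← tmul_sum, ← Matrix.mul_apply, hαβ]
    rw [Finset.sum_eq_single j] <;> simp_all
  have hzero : d ((α * β) i j) = 0 := by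
    rw [hαβ, Matrix.one_apply]
    split_ifs <;> simp [hder.map_one]
  rw [Matrix.mul_apply, map_sum] at hzero
  simp only [hα.map_mul_left hder, Finset.sum_add_distrib, hsum] at hzero
  exact eq_neg_of_add_eq_zero_left hzero

lemma map_inverse_apply (hder : IsTensorDerivation d) (hα : IsCorepresentation d α)
    (hinv : IsUnit α) (i j : Fin n) :
    d (Ring.inverse α i j) = -((1 : Matrix (Fin n) (Fin n) A) i j ⊗ₜ[ℂ] (1 : A)) := by
  rw [Matrix.eq_sum_smul_of_mul_eq_one (Ring.inverse_mul_cancel α hinv)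
    (hα.sum_smul_map_of_mul_eq_one hder (Ring.mul_inverse_cancel α hinv) · j) i]
  simp only [smul_neg, smul_tmul', smul_eq_mul, Finset.sum_neg_distrib, ← sum_tmul,
    ← Matrix.mul_apply, Ring.inverse_mul_cancel α hinv]

end IsCorepresentation

theorem invertible_corepresentation_eq_general {n : ℕ} (d : A →ₗ[ℂ] A ⊗[ℂ] A)
    (hder : IsTensorDerivation d)
    (X : A) (hX : d X = (1 : A) ⊗ₜ[ℂ] (1 : A))
    (α : Matrix (Fin n) (Fin n) A) (hα : IsCorepresentation d α) (hinv : IsUnit α) :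
    ∃ N : Matrix (Fin n) (Fin n) A, (∀ i j, d (N i j) = 0) ∧
      ∀ i j, Ring.inverse α i j = N i j - (if i = j then X else 0) := by
  refine ⟨Ring.inverse α + Matrix.diagonal fun _ => X, fun i j => ?_, fun i j => ?_⟩
  · rw [Matrix.add_apply, map_add, hα.map_inverse_apply hder hinv, Matrix.diagonal_apply,
      Matrix.one_apply]
    split_ifs <;> simp [hX]
  · simp [Matrix.diagonal_apply]

/-- If `∂` is a coassociative derivation-comultiplication on a unital `ℂ`-algebra `A`,
`X ∈ A` satisfies `dX = 1 ⊗ 1`, and `α` is an invertible corepresentation of `(A, d)`,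
then `α⁻¹ = (n_{ij} - X δ_{ij})` for some `n_{ij} ∈ ker d`. -/
theorem invertible_corepresentation_eq {n : ℕ} (d : A →ₗ[ℂ] A ⊗[ℂ] A)
    (hder : IsTensorDerivation d) (hco : IsCoassociative d)
    (X : A) (hX : d X = (1 : A) ⊗ₜ[ℂ] (1 : A))
    (α : Matrix (Fin n) (Fin n) A) (hα : IsCorepresentation d α) (hinv : IsUnit α) :
    ∃ N : Matrix (Fin n) (Fin n) A, (∀ i j, d (N i j) = 0) ∧
      ∀ i j, Ring.inverse α i j = N i j - (if i = j then X else 0) :=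
  invertible_corepresentation_eq_general d hder X hX α hα hinv
end

section
/- Let A be a unital ℂ-algebra with derivation-comultiplication ∂ and X ∈ A with ∂X = 1 ⊗ 1. If n_{ij} ∈ ker ∂ are such that β = (n_{ij} - Xδ_{ij}) is invertible in Mₙ(A), then α = β⁻¹ is a corepresentation of (A, ∂), i.e. ∂α_{ij} = Σₖ α_{ik} ⊗ α_{kj}. -/
/-!
Read `A ⊗ A` as a ring: the bimodule actions become multiplication by `a ⊗ 1` on the left and by
`1 ⊗ b` on the right, so `∂` is a derivation twisted by the two inclusions `A → A ⊗ A`. Applying it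
entrywise to `αβ = 1` gives the usual formula `∂α = -α (∂β) α`, and `∂β = -1` since `∂n_{ij} = 0`
and `∂X = 1 ⊗ 1`. Hence `∂α_{ij} = Σₖ (α_{ik} ⊗ 1)(1 ⊗ α_{kj}) = Σₖ α_{ik} ⊗ α_{kj}`.
-/

open TensorProduct

variable {A : Type*} [Ring A] [Algebra ℂ A]

open Matrix

section TwistedDerivation

variable {R S : Type*} [Ring R] [Ring S]

/-- A derivation into `S` viewed as an `R`-bimodule through `f` on the left and `g` on the right. -/
def IsTwistedDerivation (f g : R →+* S) (d : R →+ S) : Prop :=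
  ∀ a b, d (a * b) = f a * d b + d a * g b

namespace IsTwistedDerivation

variable {f g : R →+* S} {d : R →+ S} {l m p : Type*}

theorem map_one (hd : IsTwistedDerivation f g d) : d 1 = 0 := by
  have h := hd 1 1
  rw [mul_one, f.map_one, g.map_one, one_mul, mul_one] at h
  exact add_eq_left.mp h.symm

theorem map_matrix_one [DecidableEq m] (hd : IsTwistedDerivation f g d) :
    (1 : Matrix m m R).map d = 0 := by
  ext i j
  by_cases h : i = j <;> simp [one_apply, h, hd.map_one]

theorem map_matrix_mul [Fintype m] (hd : IsTwistedDerivation f g d) (α : Matrix l m R)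
    (β : Matrix m p R) :
    (α * β).map d = α.map f * β.map d + α.map d * β.map g := by
  ext i j
  simp only [map_apply, Matrix.add_apply, mul_apply, map_sum, hd _ _, Finset.sum_add_distrib]

theorem map_matrix_of_mul_eq_one [Fintype m] [DecidableEq m] (hd : IsTwistedDerivation f g d)
    {α β : Matrix m m R} (hαβ : α * β = 1) (hβα : β * α = 1) :
    α.map d = -(α.map f * β.map d * α.map g) := by
  have h_zero : α.map f * β.map d + α.map d * β.map g = 0 := by
    rw [← hd.map_matrix_mul, hαβ, hd.map_matrix_one]
  have h_inv : β.map g * α.map g = 1 := by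
    rw [← Matrix.map_mul, hβα, Matrix.map_one g g.map_zero g.map_one]
  calc α.map d = α.map d * (β.map g * α.map g) := by rw [h_inv, mul_one]
    _ = (α.map f * β.map d + α.map d * β.map g) * α.map g - α.map f * β.map d * α.map g := by
      noncomm_ring
    _ = -(α.map f * β.map d * α.map g) := by rw [h_zero]; noncomm_ring

end IsTwistedDerivation

end TwistedDerivation

section TensorDerivation

open Algebra.TensorProduct

variable {K B : Type*} [CommSemiring K] [Semiring B] [Algebra K B]

theorem rTensor_mulLeft_eq_mul (a : B) (x : B ⊗[K] B) :
    LinearMap.rTensor B (LinearMap.mulLeft K a) x = (a ⊗ₜ 1) * x := by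
  induction x using TensorProduct.induction_on with
  | zero => simp
  | tmul x y => simp
  | add x y hx hy => simp [mul_add, hx, hy]

theorem lTensor_mulRight_eq_mul (b : B) (x : B ⊗[K] B) :
    LinearMap.lTensor B (LinearMap.mulRight K b) x = x * (1 ⊗ₜ b) := by
  induction x using TensorProduct.induction_on with
  | zero => simp
  | tmul x y => simp
  | add x y hx hy => simp [add_mul, hx, hy]

theorem IsTensorDerivation.isTwistedDerivation {d : A →ₗ[ℂ] A ⊗[ℂ] A}
    (hd : IsTensorDerivation d) :
    IsTwistedDerivation includeLeftRingHom (includeRight : A →ₐ[ℂ] A ⊗[ℂ] A).toRingHom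
      d.toAddMonoidHom := fun a b => by
  simpa [rTensor_mulLeft_eq_mul, lTensor_mulRight_eq_mul] using hd a b

end TensorDerivation

theorem inverse_is_corepresentation_general {n : ℕ} (d : A →ₗ[ℂ] A ⊗[ℂ] A)
    (hder : IsTensorDerivation d)
    (X : A) (hX : d X = (1 : A) ⊗ₜ[ℂ] (1 : A))
    (N : Matrix (Fin n) (Fin n) A) (hN : ∀ i j, d (N i j) = 0)
    (β : Matrix (Fin n) (Fin n) A)
    (hβ : ∀ i j, β i j = N i j - (if i = j then X else 0))
    (hinv : IsUnit β) :
    IsCorepresentation d (Ring.inverse β) := by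
  have hdβ : β.map d = -1 := by
    ext i j
    by_cases h : i = j <;> simp [hβ, hN, hX, h, one_apply, Algebra.TensorProduct.one_def]
  have hdα := hder.isTwistedDerivation.map_matrix_of_mul_eq_one
    (Ring.inverse_mul_cancel β hinv) (Ring.mul_inverse_cancel β hinv)
  intro i j
  simpa [hdβ, mul_apply] using congrFun (congrFun hdα i) j

/-- If `d` is a coassociative derivation-comultiplication on a unital `ℂ`-algebra `A`,
`X ∈ A` satisfies `dX = 1 ⊗ 1`, and `n_{ij} ∈ ker d` are such that
`β = (n_{ij} - X δ_{ij})` is invertible in `Mₙ(A)`, then `α = β⁻¹` is a corepresentation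
of `(A, d)`. -/
theorem inverse_is_corepresentation {n : ℕ} (d : A →ₗ[ℂ] A ⊗[ℂ] A)
    (hder : IsTensorDerivation d) (hco : IsCoassociative d)
    (X : A) (hX : d X = (1 : A) ⊗ₜ[ℂ] (1 : A))
    (N : Matrix (Fin n) (Fin n) A) (hN : ∀ i j, d (N i j) = 0)
    (β : Matrix (Fin n) (Fin n) A)
    (hβ : ∀ i j, β i j = N i j - (if i = j then X else 0))
    (hinv : IsUnit β) :
    IsCorepresentation d (Ring.inverse β) :=
  inverse_is_corepresentation_general d hder X hX N hN β hβ hinv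
end

section
/- Let (M, τ) be a von Neumann algebra with faithful normal trace state, B a unital *-subalgebra, X = X* ∈ M, and p ∈ M a projection commuting with B such that X is algebraically free from B[p]. Let α = τ(p), X_p = α⁻¹pXp, and define ψ : pMp → M by ψ(pmp) = α⁻¹pmp. Then ψ maps Bp⟨X_p⟩ into B⟨p, X⟩ and (ψ ⊗ ψ) ∘ ∂_{X_p:Bp} = ∂_{X:B[p]} ∘ ψ on Bp⟨X_p⟩. -/
open TensorProduct

/-!
Both difference quotients are derivations, so the set where `α⁻¹ ∂_{X_p:Bp}` agrees with
`∂_{X:B[p]}` is closed under products and contains every `b p` (both sides vanish) and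
`X_p = α⁻¹ p X p`, since `∂_{X:B[p]}(p X p) = p ⊗ p`. Hence the two agree on `Bp⟨X_p⟩`, and
scaling the tensor factors by `α⁻¹` once more gives `(ψ ⊗ ψ) ∘ ∂_{X_p:Bp} = ∂_{X:B[p]} ∘ ψ`.
-/

/-- `D (x y) = x · D y + D x · y`, with `M` acting on `M ⊗ M` by the outer bimodule structure. -/
def IsLeibnizOn {R M : Type*} [CommSemiring R] [Semiring M] [Algebra R M]
    (D : M →ₗ[R] M ⊗[R] M) (S : Set M) : Prop :=
  ∀ x ∈ S, ∀ y ∈ S, D (x * y) =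
    LinearMap.rTensor M (LinearMap.mulLeft R x) (D y) +
    LinearMap.lTensor M (LinearMap.mulRight R y) (D x)

namespace IsLeibnizOn

variable {R M : Type*} [CommSemiring R] [Semiring M] [Algebra R M]
  {D D₁ D₂ : M →ₗ[R] M ⊗[R] M} {S T : Set M} {x y : M}

theorem mono (hD : IsLeibnizOn D T) (hST : S ⊆ T) : IsLeibnizOn D S :=
  fun x hx y hy => hD x (hST hx) y (hST hy)

theorem map_mul_of_map_left_eq_zero (hD : IsLeibnizOn D S) (hx : x ∈ S) (hy : y ∈ S)
    (hDx : D x = 0) : D (x * y) = LinearMap.rTensor M (LinearMap.mulLeft R x) (D y) := by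
  rw [hD x hx y hy, hDx, map_zero, add_zero]

theorem map_mul_of_map_right_eq_zero (hD : IsLeibnizOn D S) (hx : x ∈ S) (hy : y ∈ S)
    (hDy : D y = 0) : D (x * y) = LinearMap.lTensor M (LinearMap.mulRight R y) (D x) := by
  rw [hD x hx y hy, hDy, map_zero, zero_add]

theorem map_mul_eq_zero (hD : IsLeibnizOn D S) (hx : x ∈ S) (hy : y ∈ S)
    (hDx : D x = 0) (hDy : D y = 0) : D (x * y) = 0 := by
  rw [hD.map_mul_of_map_left_eq_zero hx hy hDx, hDy, map_zero]

theorem map_mul_mul_eq_tmul (hD : IsLeibnizOn D S) {a : M} (ha : a ∈ S) (hx : x ∈ S)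
    (hax : a * x ∈ S) (hDa : D a = 0) (hDx : D x = 1 ⊗ₜ[R] 1) :
    D (a * x * a) = a ⊗ₜ[R] a := by
  rw [hD.map_mul_of_map_right_eq_zero hax ha hDa, hD.map_mul_of_map_left_eq_zero ha hx hDa, hDx]
  simp

theorem smul_eq_of_mem_adjoin {s : Set M} (c : R)
    (hD₁ : IsLeibnizOn D₁ (NonUnitalAlgebra.adjoin R s))
    (hD₂ : IsLeibnizOn D₂ (NonUnitalAlgebra.adjoin R s))
    (hs : ∀ x ∈ s, c • D₁ x = D₂ x) :
    ∀ x ∈ NonUnitalAlgebra.adjoin R s, c • D₁ x = D₂ x := by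
  intro x hx
  induction hx using NonUnitalAlgebra.adjoin_induction with
  | mem x hx => exact hs x hx
  | zero => simp
  | add x y _ _ ihx ihy => rw [map_add, map_add, smul_add, ihx, ihy]
  | mul x y hx hy ihx ihy =>
    rw [hD₁ x hx y hy, hD₂ x hx y hy, ← ihx, ← ihy, smul_add, map_smul, map_smul]
  | smul r x _ ihx => rw [map_smul, map_smul, smul_comm, ihx]

end IsLeibnizOn

theorem coalgebraMorphism_free_compression_general
    {M : Type*} [Ring M] [Algebra ℂ M]
    (B : Subalgebra ℂ M)
    (X : M)
    (p : M)
    -- `α = τ(p)` and `X_p = α⁻¹ p X p`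
    (α : ℂ)
    (Xp : M) (hXp : Xp = α⁻¹ • (p * X * p))
    -- `Bp⟨X_p⟩`, the polynomials in `X_p` with coefficients in `Bp` (a nonunital
    -- subalgebra of `M` contained in the corner `pMp`, with unit `p`)
    (A₁ : NonUnitalSubalgebra ℂ M)
    (hA₁ : A₁ = NonUnitalAlgebra.adjoin ℂ ({x | ∃ b ∈ B, x = b * p} ∪ {Xp}))
    -- `B⟨p, X⟩`, the subalgebra of `M` generated by `B`, `p` and `X`
    (A₂ : Subalgebra ℂ M)
    (hA₂ : A₂ = Algebra.adjoin ℂ ((B : Set M) ∪ {p, X}))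
    -- the free difference quotient `∂_{X_p : Bp}` on `Bp⟨X_p⟩`
    (D₁ : M →ₗ[ℂ] M ⊗[ℂ] M)
    (hD₁der : ∀ x ∈ A₁, ∀ y ∈ A₁, D₁ (x * y) =
      LinearMap.rTensor M (LinearMap.mulLeft ℂ x) (D₁ y) +
      LinearMap.lTensor M (LinearMap.mulRight ℂ y) (D₁ x))
    (hD₁B : ∀ b ∈ B, D₁ (b * p) = 0)
    (hD₁X : D₁ Xp = p ⊗ₜ[ℂ] p)
    -- the free difference quotient `∂_{X : B[p]}` on `B⟨p, X⟩`
    (D₂ : M →ₗ[ℂ] M ⊗[ℂ] M)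
    (hD₂der : ∀ x ∈ A₂, ∀ y ∈ A₂, D₂ (x * y) =
      LinearMap.rTensor M (LinearMap.mulLeft ℂ x) (D₂ y) +
      LinearMap.lTensor M (LinearMap.mulRight ℂ y) (D₂ x))
    (hD₂B : ∀ b ∈ B, D₂ b = 0)
    (hD₂p : D₂ p = 0)
    (hD₂X : D₂ X = (1 : M) ⊗ₜ[ℂ] (1 : M)) :
    -- `ψ` maps `Bp⟨X_p⟩` into `B⟨p, X⟩`, and `(ψ ⊗ ψ) ∘ ∂_{X_p:Bp} = ∂_{X:B[p]} ∘ ψ`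
    (∀ x ∈ A₁, α⁻¹ • x ∈ A₂) ∧
    (∀ x ∈ A₁, (α⁻¹ * α⁻¹) • D₁ x = D₂ (α⁻¹ • x)) := by
  subst hA₁ hA₂
  set A₂ := Algebra.adjoin ℂ ((B : Set M) ∪ {p, X})
  have hD₂ : IsLeibnizOn D₂ A₂ := hD₂der
  have hB : ∀ b ∈ B, b ∈ A₂ := fun b hb => Algebra.subset_adjoin (Or.inl hb)
  have hp : p ∈ A₂ := Algebra.subset_adjoin (Or.inr (by simp))
  have hX : X ∈ A₂ := Algebra.subset_adjoin (Or.inr (by simp))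
  have hA₁A₂ : NonUnitalAlgebra.adjoin ℂ ({x | ∃ b ∈ B, x = b * p} ∪ {Xp}) ≤
      A₂.toNonUnitalSubalgebra := by
    refine NonUnitalAlgebra.adjoin_le (Set.union_subset ?_ (Set.singleton_subset_iff.2 ?_))
    · rintro _ ⟨b, hb, rfl⟩
      exact mul_mem (hB b hb) hp
    · exact hXp ▸ SMulMemClass.smul_mem _ (mul_mem (mul_mem hp hX) hp)
  have hagree := IsLeibnizOn.smul_eq_of_mem_adjoin α⁻¹ hD₁der (hD₂.mono hA₁A₂) <| by
    rintro _ (⟨b, hb, rfl⟩ | rfl)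
    · rw [hD₁B b hb, smul_zero, hD₂.map_mul_eq_zero (hB b hb) hp (hD₂B b hb) hD₂p]
    · rw [hD₁X, hXp, map_smul,
        hD₂.map_mul_mul_eq_tmul hp hX (mul_mem hp hX) hD₂p hD₂X]
  refine ⟨fun x hx => SMulMemClass.smul_mem _ (hA₁A₂ hx), fun x hx => ?_⟩
  rw [map_smul, ← hagree x hx, mul_smul]

/-- The coalgebra morphism associated to free compression (Lemma 3.1): let `(M, τ)` be a
von Neumann algebra with faithful normal trace state, `B ⊆ M` a unital *-subalgebra,
`X = X* ∈ M`, and `p ∈ M` a nonzero projection commuting with `B`, with `X` algebraically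
free from `B[p]`.  Put `α = τ(p)`, `X_p = α⁻¹ p X p`, and let `ψ : pMp → M` be
`ψ(pmp) = α⁻¹ pmp`.  Let `∂₁ = ∂_{X_p : Bp}` be the free difference quotient on
`Bp⟨X_p⟩ ⊆ pMp` (the derivation killing `Bp` with `∂₁ X_p = p ⊗ p`) and `∂₂ = ∂_{X : B[p]}`
the free difference quotient on `B⟨p, X⟩ ⊆ M`.  Then `ψ` maps `Bp⟨X_p⟩` into `B⟨p, X⟩` and
`(ψ ⊗ ψ) ∘ ∂₁ = ∂₂ ∘ ψ` on `Bp⟨X_p⟩`. -/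
theorem coalgebraMorphism_free_compression
    {M : Type*} [Ring M] [Algebra ℂ M] [StarRing M] [StarModule ℂ M]
    (τ : M →ₗ[ℂ] ℂ)
    (htrace1 : τ 1 = 1)
    (htracial : ∀ a b : M, τ (a * b) = τ (b * a))
    (hstar : ∀ a : M, τ (star a) = starRingEnd ℂ (τ a))
    (hpos : ∀ a : M, 0 ≤ (τ (star a * a)).re ∧ (τ (star a * a)).im = 0)
    (hfaithful : ∀ a : M, τ (star a * a) = 0 → a = 0)
    (B : Subalgebra ℂ M) (hBstar : ∀ b ∈ B, star b ∈ B)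
    (X : M) (hX : IsSelfAdjoint X)
    (p : M) (hproj : p * p = p ∧ star p = p) (hp0 : p ≠ 0)
    (hcomm : ∀ b ∈ B, b * p = p * b)
    -- `α = τ(p)` and `X_p = α⁻¹ p X p`
    (α : ℂ) (hα : α = τ p)
    (Xp : M) (hXp : Xp = α⁻¹ • (p * X * p))
    -- `Bp⟨X_p⟩`, the polynomials in `X_p` with coefficients in `Bp` (a nonunital
    -- subalgebra of `M` contained in the corner `pMp`, with unit `p`)
    (A₁ : NonUnitalSubalgebra ℂ M)
    (hA₁ : A₁ = NonUnitalAlgebra.adjoin ℂ ({x | ∃ b ∈ B, x = b * p} ∪ {Xp}))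
    -- `B⟨p, X⟩`, the subalgebra of `M` generated by `B`, `p` and `X`
    (A₂ : Subalgebra ℂ M)
    (hA₂ : A₂ = Algebra.adjoin ℂ ((B : Set M) ∪ {p, X}))
    -- the free difference quotient `∂_{X_p : Bp}` on `Bp⟨X_p⟩`
    (D₁ : M →ₗ[ℂ] M ⊗[ℂ] M)
    (hD₁der : ∀ x ∈ A₁, ∀ y ∈ A₁, D₁ (x * y) =
      LinearMap.rTensor M (LinearMap.mulLeft ℂ x) (D₁ y) +
      LinearMap.lTensor M (LinearMap.mulRight ℂ y) (D₁ x))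
    (hD₁B : ∀ b ∈ B, D₁ (b * p) = 0)
    (hD₁X : D₁ Xp = p ⊗ₜ[ℂ] p)
    -- the free difference quotient `∂_{X : B[p]}` on `B⟨p, X⟩`
    (D₂ : M →ₗ[ℂ] M ⊗[ℂ] M)
    (hD₂der : ∀ x ∈ A₂, ∀ y ∈ A₂, D₂ (x * y) =
      LinearMap.rTensor M (LinearMap.mulLeft ℂ x) (D₂ y) +
      LinearMap.lTensor M (LinearMap.mulRight ℂ y) (D₂ x))
    (hD₂B : ∀ b ∈ B, D₂ b = 0)
    (hD₂p : D₂ p = 0)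
    (hD₂X : D₂ X = (1 : M) ⊗ₜ[ℂ] (1 : M)) :
    -- `ψ` maps `Bp⟨X_p⟩` into `B⟨p, X⟩`, and `(ψ ⊗ ψ) ∘ ∂_{X_p:Bp} = ∂_{X:B[p]} ∘ ψ`
    (∀ x ∈ A₁, α⁻¹ • x ∈ A₂) ∧
    (∀ x ∈ A₁, (α⁻¹ * α⁻¹) • D₁ x = D₂ (α⁻¹ • x)) :=
  coalgebraMorphism_free_compression_general B X p α Xp hXp A₁ hA₁ A₂ hA₂ D₁ hD₁der hD₁B hD₁X D₂
    hD₂der hD₂B hD₂p hD₂X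
end

section
/- With M, B, X, p, Ψ as in the coalgebra-morphism setup, assume additionally that p is independent from B with respect to τ. Then Ψ(bp) = b for all b ∈ B (in particular Ψ is unital), τ ∘ Ψ = τ_p, and Ψ ∘ E^{(pMp)}_{Bp} = E^{(M)}_B ∘ Ψ. -/
variable {M : Type*} [Ring M] [Algebra ℂ M] [StarRing M] [StarModule ℂ M]

/-- `E` is the `τ`-preserving conditional expectation onto the subalgebra `N`. -/
def IsCondExp (τ : M →ₗ[ℂ] ℂ) (N : Subalgebra ℂ M) (E : M →ₗ[ℂ] M) : Prop :=
  (∀ m, E m ∈ N) ∧ (∀ n ∈ N, E n = n) ∧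
  (∀ n₁ ∈ N, ∀ n₂ ∈ N, ∀ m, E (n₁ * m * n₂) = n₁ * E m * n₂) ∧
  (∀ m, τ (E m) = τ m)

/-- `A` and `C` are free with amalgamation over `B` with respect to `E = E_B`. -/
def AreFreeWithAmalgamation (E : M →ₗ[ℂ] M) (A C : Subalgebra ℂ M) : Prop :=
  ∀ l : List (M × Bool), l ≠ [] →
    (∀ q ∈ l, (if q.2 then q.1 ∈ A else q.1 ∈ C) ∧ E q.1 = 0) →
    l.Chain' (fun q r => q.2 ≠ r.2) →
    E (l.map Prod.fst).prod = 0

/-!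
Everything rests on the characterisation of a conditional expectation onto a star-closed
subalgebra `N` of a faithful trace: `E m` is the unique `x ∈ N` with `τ (n * x) = τ (n * m)`
for all `n ∈ N`. Independence of `p` from `B` gives `E_B p = τ p`, and freeness of `B⟨X⟩` and `p`
over `B` then upgrades this to independence of `p` from `B⟨X⟩`, so that `E_{B⟨X⟩} (b p) = α b`.
For `E₂ (p m p) = b p` the invariance of `τ` under `E₂` shows `E_B (p m p) = α b` as well, and
the three claims follow, the last one through the tower property `E_B ∘ E_{B⟨X⟩} = E_B`.
-/

theorem Subalgebra.star_mem_adjoin_of_star_mem {s : Set M} (hs : ∀ x ∈ s, star x ∈ s)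
    {z : M} (hz : z ∈ Algebra.adjoin ℂ s) : star z ∈ Algebra.adjoin ℂ s := by
  rw [← Subalgebra.mem_star_iff, Subalgebra.star_adjoin_comm]
  exact Algebra.adjoin_mono (fun x hx => Set.mem_star.mpr (hs x hx)) hz

namespace IsCondExp

omit [StarModule ℂ M]

variable {τ : M →ₗ[ℂ] ℂ} {N : Subalgebra ℂ M} {E : M →ₗ[ℂ] M}

section

omit [StarRing M]

theorem mem (hE : IsCondExp τ N E) (m : M) : E m ∈ N := hE.1 m

theorem apply_of_mem (hE : IsCondExp τ N E) {n : M} (hn : n ∈ N) : E n = n := hE.2.1 n hn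

theorem apply_mul_mul (hE : IsCondExp τ N E) {n₁ n₂ : M} (hn₁ : n₁ ∈ N) (hn₂ : n₂ ∈ N) (m : M) :
    E (n₁ * m * n₂) = n₁ * E m * n₂ :=
  hE.2.2.1 n₁ hn₁ n₂ hn₂ m

theorem trace_apply (hE : IsCondExp τ N E) (m : M) : τ (E m) = τ m := hE.2.2.2 m

theorem trace_mul_apply (hE : IsCondExp τ N E) {n : M} (hn : n ∈ N) (m : M) :
    τ (n * E m) = τ (n * m) := by
  have h := hE.apply_mul_mul hn (one_mem N) m
  rw [mul_one, mul_one] at h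
  rw [← h, hE.trace_apply]

end

theorem apply_eq_of_forall_trace_mul (hE : IsCondExp τ N E)
    (hfaithful : ∀ a : M, τ (star a * a) = 0 → a = 0) (hNstar : ∀ n ∈ N, star n ∈ N)
    {m x : M} (hx : x ∈ N) (h : ∀ n ∈ N, τ (n * x) = τ (n * m)) : E m = x := by
  have hw : E m - x ∈ N := sub_mem (hE.mem m) hx
  refine sub_eq_zero.mp (hfaithful _ ?_)
  have hsw := hNstar _ hw
  rw [mul_sub, map_sub, hE.trace_mul_apply hsw, h _ hsw, sub_self]

theorem apply_apply_of_le {N' : Subalgebra ℂ M} {F : M →ₗ[ℂ] M} (hE : IsCondExp τ N E)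
    (hF : IsCondExp τ N' F) (hle : N ≤ N') (hfaithful : ∀ a : M, τ (star a * a) = 0 → a = 0)
    (hNstar : ∀ n ∈ N, star n ∈ N) (m : M) : E (F m) = E m :=
  hE.apply_eq_of_forall_trace_mul hfaithful hNstar (hE.mem m) fun n hn => by
    rw [hE.trace_mul_apply hn, hF.trace_mul_apply (hle hn)]

theorem apply_mul_of_indep (hE : IsCondExp τ N E)
    (hfaithful : ∀ a : M, τ (star a * a) = 0 → a = 0) (hNstar : ∀ n ∈ N, star n ∈ N)
    {c : M} (hc : ∀ n ∈ N, τ (n * c) = τ n * τ c) {b : M} (hb : b ∈ N) :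
    E (b * c) = τ c • b :=
  hE.apply_eq_of_forall_trace_mul hfaithful hNstar (N.smul_mem hb _) fun n hn => by
    rw [mul_smul_comm, map_smul, smul_eq_mul, ← mul_assoc, hc _ (mul_mem hn hb), mul_comm]

end IsCondExp

namespace AreFreeWithAmalgamation

omit [StarRing M] [StarModule ℂ M]

variable {τ : M →ₗ[ℂ] ℂ} {N A C : Subalgebra ℂ M} {E : M →ₗ[ℂ] M}

theorem apply_mul (hfree : AreFreeWithAmalgamation E A C) (hE : IsCondExp τ N E)
    (hNA : N ≤ A) (hNC : N ≤ C) {y c : M} (hy : y ∈ A) (hc : c ∈ C) :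
    E (y * c) = E y * E c := by
  have hEy := hE.mem y
  have hEc := hE.mem c
  have hcentred : E ((y - E y) * (c - E c)) = 0 := by
    have hword := hfree [(y - E y, true), (c - E c, false)] (by simp) ?_
      (List.isChain_cons_cons.mpr ⟨by simp, List.isChain_singleton _⟩)
    · simpa using hword
    simp only [List.mem_cons, List.not_mem_nil, or_false]
    rintro q (rfl | rfl)
    · exact ⟨by simpa using sub_mem hy (hNA hEy), by rw [map_sub, hE.apply_of_mem hEy, sub_self]⟩
    · exact ⟨by simpa using sub_mem hc (hNC hEc), by rw [map_sub, hE.apply_of_mem hEc, sub_self]⟩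
  have hyEc : E (y * E c) = E y * E c := by
    simpa using hE.apply_mul_mul (one_mem N) hEc y
  have hEyc : E (E y * c) = E y * E c := by
    simpa using hE.apply_mul_mul hEy (one_mem N) c
  have hEyEc : E (E y * E c) = E y * E c := hE.apply_of_mem (mul_mem hEy hEc)
  rw [sub_mul, mul_sub, mul_sub, map_sub, map_sub, map_sub, hyEc, hEyc, hEyEc] at hcentred
  rwa [sub_self, sub_zero, sub_eq_zero] at hcentred

theorem trace_mul_of_apply_eq_smul_one (hfree : AreFreeWithAmalgamation E A C)
    (hE : IsCondExp τ N E) (hNA : N ≤ A) (hNC : N ≤ C) {c : M} (hc : c ∈ C)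
    (hEc : E c = τ c • 1) {y : M} (hy : y ∈ A) : τ (y * c) = τ y * τ c := by
  rw [← hE.trace_apply, hfree.apply_mul hE hNA hNC hy hc, hEc, mul_smul_comm, mul_one, map_smul,
    hE.trace_apply, smul_eq_mul, mul_comm]

end AreFreeWithAmalgamation

omit [StarModule ℂ M] in
theorem IsCondExp.apply_compression_eq_trace_smul {τ : M →ₗ[ℂ] ℂ} {B : Subalgebra ℂ M}
    {EB E₂ : M →ₗ[ℂ] M} (hEB : IsCondExp τ B EB)
    (hfaithful : ∀ a : M, τ (star a * a) = 0 → a = 0) (hBstar : ∀ b ∈ B, star b ∈ B)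
    {p : M} (hpp : p * p = p) (hcomm : ∀ b ∈ B, b * p = p * b)
    (hindep : ∀ b ∈ B, τ (b * p) = τ b * τ p)
    (hE₂mod : ∀ b₁ ∈ B, ∀ b₂ ∈ B, ∀ m : M,
      E₂ ((b₁ * p) * (p * m * p) * (b₂ * p)) = (b₁ * p) * E₂ (p * m * p) * (b₂ * p))
    (hE₂τ : ∀ m : M, τ (E₂ (p * m * p)) = τ (p * m * p))
    {m b : M} (hb : b ∈ B) (hbm : E₂ (p * m * p) = b * p) :
    EB (p * m * p) = τ p • b := by
  refine hEB.apply_eq_of_forall_trace_mul hfaithful hBstar (B.smul_mem hb _) fun b' hb' => ?_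
  have hpp' : ∀ x, p * (p * x) = p * x := fun x => by rw [← mul_assoc, hpp]
  have hcomm' : ∀ b ∈ B, ∀ x, b * (p * x) = p * (b * x) := fun b hb x => by
    rw [← mul_assoc, hcomm b hb, mul_assoc]
  have hcompress : b' * (p * m * p) = p * (b' * m) * p := by
    simp only [mul_assoc, hcomm' b' hb']
  have hE₂ : E₂ (p * (b' * m) * p) = b' * b * p := by
    have h := hE₂mod b' hb' 1 (one_mem B) m
    rw [hbm] at h
    simp only [one_mul, mul_assoc, hpp, hpp', ← hcomm' b hb] at h
    simpa only [mul_assoc, hcomm' b' hb'] using h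
  rw [hcompress, ← hE₂τ, hE₂, hindep _ (mul_mem hb' hb), mul_smul_comm, map_smul, smul_eq_mul,
    mul_comm]

theorem condExpMorphism_unital_trace_preserving_general
    (τ : M →ₗ[ℂ] ℂ)
    (hfaithful : ∀ a : M, τ (star a * a) = 0 → a = 0)
    (B : Subalgebra ℂ M) (hBstar : ∀ b ∈ B, star b ∈ B)
    (X : M) (hX : IsSelfAdjoint X)
    (p : M) (hproj : p * p = p ∧ star p = p) (hp0 : p ≠ 0)
    (hcomm : ∀ b ∈ B, b * p = p * b)
    (α : ℂ) (hα : α = τ p)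
    -- `p` is independent from `B` with respect to `τ`
    (hindep : ∀ b ∈ B, τ (b * p) = τ b * τ p)
    -- `B⟨X⟩` and the conditional expectations `E_{B⟨X⟩}`, `E_B`
    (BX : Subalgebra ℂ M) (hBX : BX = Algebra.adjoin ℂ ((B : Set M) ∪ {X}))
    (EB : M →ₗ[ℂ] M) (hEB : IsCondExp τ B EB)
    (EBX : M →ₗ[ℂ] M) (hEBX : IsCondExp τ BX EBX)
    -- `X` and `p` are `B`-freely independent
    (hfree : AreFreeWithAmalgamation EB BX (Algebra.adjoin ℂ ((B : Set M) ∪ {p})))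
    -- the `τ_p`-preserving conditional expectation of `pMp` onto `W*(Bp)`
    (E₂ : M →ₗ[ℂ] M)
    (hE₂range : ∀ m : M, ∃ b ∈ B, E₂ (p * m * p) = b * p)
    (hE₂mod : ∀ b₁ ∈ B, ∀ b₂ ∈ B, ∀ m : M,
      E₂ ((b₁ * p) * (p * m * p) * (b₂ * p)) = (b₁ * p) * E₂ (p * m * p) * (b₂ * p))
    (hE₂τ : ∀ m : M, τ (E₂ (p * m * p)) = τ (p * m * p)) :
    -- `Ψ(bp) = b` (so `Ψ` is unital), `τ ∘ Ψ = τ_p`, and `Ψ ∘ E_{Bp} = E_B ∘ Ψ` on `pMp`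
    (∀ b ∈ B, α⁻¹ • EBX (b * p) = b) ∧
    (∀ m : M, τ (α⁻¹ • EBX (p * m * p)) = α⁻¹ * τ (p * m * p)) ∧
    (∀ m : M, α⁻¹ • EBX (E₂ (p * m * p)) = EB (α⁻¹ • EBX (p * m * p))) := by
  obtain ⟨hpp, hps⟩ := hproj
  subst hα hBX
  have hα0 : τ p ≠ 0 := fun h => hp0 (hfaithful p (by rw [hps, hpp, h]))
  have hBle : B ≤ Algebra.adjoin ℂ ((B : Set M) ∪ {X}) := fun b hb =>
    Algebra.subset_adjoin (Or.inl hb)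
  have hBXstar : ∀ z ∈ Algebra.adjoin ℂ ((B : Set M) ∪ {X}),
      star z ∈ Algebra.adjoin ℂ ((B : Set M) ∪ {X}) :=
    fun z => Subalgebra.star_mem_adjoin_of_star_mem <| by
      rintro x (hx | rfl)
      exacts [Or.inl (hBstar x hx), Or.inr hX.star_eq]
  have hEBp : EB p = τ p • 1 := by
    simpa using hEB.apply_mul_of_indep hfaithful hBstar hindep (one_mem B)
  have hindepBX : ∀ z ∈ Algebra.adjoin ℂ ((B : Set M) ∪ {X}), τ (z * p) = τ z * τ p :=
    fun z => hfree.trace_mul_of_apply_eq_smul_one hEB hBle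
      (fun b hb => Algebra.subset_adjoin (Or.inl hb)) (Algebra.subset_adjoin (Or.inr rfl)) hEBp
  have hEBXbp : ∀ b ∈ B, EBX (b * p) = τ p • b := fun b hb =>
    hEBX.apply_mul_of_indep hfaithful hBXstar hindepBX (hBle hb)
  refine ⟨fun b hb => by rw [hEBXbp b hb, inv_smul_smul₀ hα0], fun m => ?_, fun m => ?_⟩
  · rw [map_smul, hEBX.trace_apply, smul_eq_mul]
  · obtain ⟨b, hb, hbm⟩ := hE₂range m
    rw [hbm, hEBXbp b hb, map_smul, hEB.apply_apply_of_le hEBX hBle hfaithful hBstar,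
      hEB.apply_compression_eq_trace_smul hfaithful hBstar hpp hcomm hindep hE₂mod hE₂τ hb hbm]

/-- Probabilistic properties of `Ψ = E_{B⟨X⟩} ∘ ψ`: with `M, B, X, p, Ψ` as in the
coalgebra-morphism setup, if moreover `p` is independent from `B` with respect to `τ`,
then `Ψ(bp) = b` for all `b ∈ B` (in particular `Ψ` is unital), `τ ∘ Ψ = τ_p`, and
`Ψ ∘ E^{(pMp)}_{Bp} = E^{(M)}_B ∘ Ψ`. -/
theorem condExpMorphism_unital_trace_preserving
    (τ : M →ₗ[ℂ] ℂ)
    (htrace1 : τ 1 = 1)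
    (htracial : ∀ a b : M, τ (a * b) = τ (b * a))
    (hstar : ∀ a : M, τ (star a) = starRingEnd ℂ (τ a))
    (hfaithful : ∀ a : M, τ (star a * a) = 0 → a = 0)
    (B : Subalgebra ℂ M) (hBstar : ∀ b ∈ B, star b ∈ B)
    (X : M) (hX : IsSelfAdjoint X)
    (p : M) (hproj : p * p = p ∧ star p = p) (hp0 : p ≠ 0)
    (hcomm : ∀ b ∈ B, b * p = p * b)
    (α : ℂ) (hα : α = τ p)
    -- `p` is independent from `B` with respect to `τ`
    (hindep : ∀ b ∈ B, τ (b * p) = τ b * τ p)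
    -- `B⟨X⟩` and the conditional expectations `E_{B⟨X⟩}`, `E_B`
    (BX : Subalgebra ℂ M) (hBX : BX = Algebra.adjoin ℂ ((B : Set M) ∪ {X}))
    (EB : M →ₗ[ℂ] M) (hEB : IsCondExp τ B EB)
    (EBX : M →ₗ[ℂ] M) (hEBX : IsCondExp τ BX EBX)
    -- `X` and `p` are `B`-freely independent
    (hfree : AreFreeWithAmalgamation EB BX (Algebra.adjoin ℂ ((B : Set M) ∪ {p})))
    -- the `τ_p`-preserving conditional expectation of `pMp` onto `W*(Bp)`
    (E₂ : M →ₗ[ℂ] M)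
    (hE₂range : ∀ m : M, ∃ b ∈ B, E₂ (p * m * p) = b * p)
    (hE₂fix : ∀ b ∈ B, E₂ (b * p) = b * p)
    (hE₂mod : ∀ b₁ ∈ B, ∀ b₂ ∈ B, ∀ m : M,
      E₂ ((b₁ * p) * (p * m * p) * (b₂ * p)) = (b₁ * p) * E₂ (p * m * p) * (b₂ * p))
    (hE₂τ : ∀ m : M, τ (E₂ (p * m * p)) = τ (p * m * p)) :
    -- `Ψ(bp) = b` (so `Ψ` is unital), `τ ∘ Ψ = τ_p`, and `Ψ ∘ E_{Bp} = E_B ∘ Ψ` on `pMp`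
    (∀ b ∈ B, α⁻¹ • EBX (b * p) = b) ∧
    (∀ m : M, τ (α⁻¹ • EBX (p * m * p)) = α⁻¹ * τ (p * m * p)) ∧
    (∀ m : M, α⁻¹ • EBX (E₂ (p * m * p)) = EB (α⁻¹ • EBX (p * m * p))) :=
  condExpMorphism_unital_trace_preserving_general τ hfaithful B hBstar X hX p hproj hp0 hcomm α hα
    hindep BX hBX EB hEB EBX hEBX hfree E₂ hE₂range hE₂mod hE₂τ
end

section
/- In the setting where p is a projection in (M, τ) independent of a W*-subalgebra B and B-free from X = X*, the conditional expectation of pMp onto W*(Bp) preserving τ_p is given by E^{(pMp)}_{Bp}(pmp) = α⁻¹ E^{(M)}_B(pmp)·p, where α = τ(p). -/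
variable {M : Type*} [Ring M] [Algebra ℂ M] [StarRing M] [StarModule ℂ M]

/-! Both `E₂(pmp)` and `α⁻¹ E_B(pmp) p` have the form `b p` with `b ∈ B`, and they pair
in the same way with every element of `B` under `τ`: for `E₂` by the bimodule property and
trace preservation, for `α⁻¹ E_B(pmp) p` because `p` is independent of `B`. Their
difference `c p` therefore satisfies `τ((cp)^* (cp)) = τ(c^* c p) = 0`, so it vanishes by
faithfulness. -/

section Faithful

variable {R A : Type*} [CommSemiring R] [Semiring A] [StarRing A] [Module R A] {τ : A →ₗ[R] R}
  {p : A}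

theorem trace_proj_ne_zero (hfaithful : ∀ a : A, τ (star a * a) = 0 → a = 0)
    (hpp : p * p = p) (hpstar : star p = p) (hp0 : p ≠ 0) : τ p ≠ 0 := fun h ↦
  hp0 (hfaithful p (by rw [hpstar, hpp, h]))

theorem mul_proj_eq_zero_of_trace_eq_zero (hfaithful : ∀ a : A, τ (star a * a) = 0 → a = 0)
    (htracial : ∀ a b : A, τ (a * b) = τ (b * a)) (hpp : p * p = p) (hpstar : star p = p)
    {c : A} (h : τ (star c * (c * p)) = 0) : c * p = 0 := by
  refine hfaithful _ ?_
  rw [star_mul, hpstar, mul_assoc, htracial, mul_assoc, mul_assoc, hpp, h]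

end Faithful

namespace IsCondExp

variable {A : Type*} [Ring A] [Algebra ℂ A] {τ : A →ₗ[ℂ] ℂ} {B : Subalgebra ℂ A}
  {E : A →ₗ[ℂ] A}

theorem trace_mul (hE : IsCondExp τ B E) {b : A} (hb : b ∈ B) (m : A) :
    τ (b * E m) = τ (b * m) := by
  have := hE.2.2.1 b hb 1 B.one_mem m
  rw [mul_one, mul_one] at this
  rw [← this, hE.2.2.2]

theorem trace_mul_mul_of_indep (hE : IsCondExp τ B E) {p : A}
    (hindep : ∀ b ∈ B, τ (b * p) = τ b * τ p) {b : A} (hb : b ∈ B) (m : A) :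
    τ (b * (E m * p)) = τ (b * m) * τ p := by
  rw [← mul_assoc, hindep _ (B.mul_mem hb (hE.1 m)), hE.trace_mul hb]

end IsCondExp

theorem trace_mul_corner_condExp {R A : Type*} [CommSemiring R] [Semiring A] [Algebra R A]
    {τ : A →ₗ[R] R} {B : Subalgebra R A} {p : A} (hpp : p * p = p)
    (hcomm : ∀ b ∈ B, b * p = p * b) {E₂ : A →ₗ[R] A}
    (hE₂range : ∀ m : A, ∃ b ∈ B, E₂ (p * m * p) = b * p)
    (hE₂mod : ∀ b₁ ∈ B, ∀ b₂ ∈ B, ∀ m : A,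
      E₂ ((b₁ * p) * (p * m * p) * (b₂ * p)) = (b₁ * p) * E₂ (p * m * p) * (b₂ * p))
    (hE₂τ : ∀ m : A, τ (E₂ (p * m * p)) = τ (p * m * p)) {b : A} (hb : b ∈ B) (m : A) :
    τ (b * E₂ (p * m * p)) = τ (b * (p * m * p)) := by
  obtain ⟨b₁, hb₁, hE₂⟩ := hE₂range m
  have hpp' : ∀ x, p * (p * x) = p * x := fun x ↦ by rw [← mul_assoc, hpp]
  have hleft : (b * p) * (p * m * p) * (1 * p) = p * (b * m) * p := by
    simp only [one_mul, mul_assoc, hpp, hpp']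
    rw [← mul_assoc, hcomm b hb, mul_assoc]
  have hright : (b * p) * E₂ (p * m * p) * (1 * p) = b * E₂ (p * m * p) := by
    rw [hE₂]
    simp only [one_mul, mul_assoc, hpp]
    rw [← mul_assoc p b₁, ← hcomm b₁ hb₁, mul_assoc, hpp]
  rw [← hright, ← hE₂mod b hb 1 B.one_mem, hleft, hE₂τ, ← mul_assoc, ← hcomm b hb,
    mul_assoc, mul_assoc, mul_assoc]

theorem corner_condExp_formula_general
    (τ : M →ₗ[ℂ] ℂ)
    (htracial : ∀ a b : M, τ (a * b) = τ (b * a))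
    (hfaithful : ∀ a : M, τ (star a * a) = 0 → a = 0)
    (B : Subalgebra ℂ M) (hBstar : ∀ b ∈ B, star b ∈ B)
    (p : M) (hproj : p * p = p ∧ star p = p) (hp0 : p ≠ 0)
    (hcomm : ∀ b ∈ B, b * p = p * b)
    (α : ℂ) (hα : α = τ p)
    -- `p` is independent from `B` with respect to `τ`
    (hindep : ∀ b ∈ B, τ (b * p) = τ b * τ p)
    (EB : M →ₗ[ℂ] M) (hEB : IsCondExp τ B EB)
    -- the `τ_p`-preserving conditional expectation of `pMp` onto `W*(Bp)`
    (E₂ : M →ₗ[ℂ] M)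
    (hE₂range : ∀ m : M, ∃ b ∈ B, E₂ (p * m * p) = b * p)
    (hE₂mod : ∀ b₁ ∈ B, ∀ b₂ ∈ B, ∀ m : M,
      E₂ ((b₁ * p) * (p * m * p) * (b₂ * p)) = (b₁ * p) * E₂ (p * m * p) * (b₂ * p))
    (hE₂τ : ∀ m : M, τ (E₂ (p * m * p)) = τ (p * m * p)) :
    ∀ m : M, E₂ (p * m * p) = α⁻¹ • (EB (p * m * p) * p) := by
  intro m
  obtain ⟨hpp, hpstar⟩ := hproj
  have hα0 : α ≠ 0 := hα ▸ trace_proj_ne_zero hfaithful hpp hpstar hp0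
  obtain ⟨b₁, hb₁, hE₂⟩ := hE₂range m
  set c := b₁ - α⁻¹ • EB (p * m * p)
  have hc : c ∈ B := B.sub_mem hb₁ (B.smul_mem (hEB.1 _) _)
  have hdiff : E₂ (p * m * p) - α⁻¹ • (EB (p * m * p) * p) = c * p := by
    rw [hE₂, sub_mul, smul_mul_assoc]
  have horth : ∀ b ∈ B, τ (b * (c * p)) = 0 := by
    intro b hb
    rw [← hdiff, mul_sub, map_sub, mul_smul_comm, map_smul, smul_eq_mul,
      trace_mul_corner_condExp hpp hcomm hE₂range hE₂mod hE₂τ hb,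
      hEB.trace_mul_mul_of_indep hindep hb, ← hα, mul_comm _ α, inv_mul_cancel_left₀ hα0,
      sub_self]
  exact sub_eq_zero.mp <| hdiff.trans <|
    mul_proj_eq_zero_of_trace_eq_zero hfaithful htracial hpp hpstar (horth _ (hBstar c hc))

/-- The `τ_p`-preserving conditional expectation of the corner `pMp` onto `W*(Bp)`:
in the setting where `p` is a nonzero projection in `(M, τ)`, commuting with a
W*-subalgebra `B`, independent of `B`, and `B`-free from `X = X*`, it is given by
`E^{(pMp)}_{Bp}(pmp) = α⁻¹ E^{(M)}_B(pmp) · p`, where `α = τ(p)`. -/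
theorem corner_condExp_formula
    (τ : M →ₗ[ℂ] ℂ)
    (htrace1 : τ 1 = 1)
    (htracial : ∀ a b : M, τ (a * b) = τ (b * a))
    (hstar : ∀ a : M, τ (star a) = starRingEnd ℂ (τ a))
    (hfaithful : ∀ a : M, τ (star a * a) = 0 → a = 0)
    (B : Subalgebra ℂ M) (hBstar : ∀ b ∈ B, star b ∈ B)
    (X : M) (hX : IsSelfAdjoint X)
    (p : M) (hproj : p * p = p ∧ star p = p) (hp0 : p ≠ 0)
    (hcomm : ∀ b ∈ B, b * p = p * b)
    (α : ℂ) (hα : α = τ p)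
    -- `p` is independent from `B` with respect to `τ`
    (hindep : ∀ b ∈ B, τ (b * p) = τ b * τ p)
    (EB : M →ₗ[ℂ] M) (hEB : IsCondExp τ B EB)
    -- `p` is `B`-free from `X`
    (hfree : AreFreeWithAmalgamation EB (Algebra.adjoin ℂ ((B : Set M) ∪ {X}))
      (Algebra.adjoin ℂ ((B : Set M) ∪ {p})))
    -- the `τ_p`-preserving conditional expectation of `pMp` onto `W*(Bp)`
    (E₂ : M →ₗ[ℂ] M)
    (hE₂range : ∀ m : M, ∃ b ∈ B, E₂ (p * m * p) = b * p)
    (hE₂fix : ∀ b ∈ B, E₂ (b * p) = b * p)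
    (hE₂mod : ∀ b₁ ∈ B, ∀ b₂ ∈ B, ∀ m : M,
      E₂ ((b₁ * p) * (p * m * p) * (b₂ * p)) = (b₁ * p) * E₂ (p * m * p) * (b₂ * p))
    (hE₂τ : ∀ m : M, τ (E₂ (p * m * p)) = τ (p * m * p)) :
    ∀ m : M, E₂ (p * m * p) = α⁻¹ • (EB (p * m * p) * p) :=
  corner_condExp_formula_general τ htracial hfaithful B hBstar p hproj hp0 hcomm α hα hindep EB hEB
    E₂ hE₂range hE₂mod hE₂τ
end
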